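/- arXiv:1501.06067 — 12 statements merged into one kernel-verified Lean document; each statement's English description precedes it below -/
import Mathlib

section
/- For any subset A of a semigroup S, the separator Sep A is closed under multiplication (i.e., if it is non-empty then it is a subsemigroup of S). -/
def Separator {S : Type*} [Semigroup S] (A : Set S) : Set S :=
  {x | (∀ a ∈ A, x * a ∈ A ∧ a * x ∈ A) ∧ ∀ b ∈ Aᶜ, x * b ∈ Aᶜ ∧ b * x ∈ Aᶜ}
theorem sep_mul_closed {S : Type*} [Semigroup S] (A : Set S) :
    ∀ x ∈ Separator A, ∀ y ∈ Separator A, x * y ∈ Separator A := by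
  rintro x ⟨hx1, hx2⟩ y ⟨hy1, hy2⟩
  constructor
  · intro a ha
    exact ⟨by rw [mul_assoc]; exact (hx1 _ (hy1 a ha).1).1,
      by rw [← mul_assoc]; exact (hy1 _ (hx1 a ha).2).2⟩
  · intro b hb
    exact ⟨by rw [mul_assoc]; exact (hx2 _ (hy2 b hb).1).1,
      by rw [← mul_assoc]; exact (hy2 _ (hx2 b hb).2).2⟩
end

section
/- For any subset A of a semigroup S, Sep A ∩ Sep (Sep A) ⊆ Sep (A ∪ Sep A). -/
theorem sep_inter_sep_sep_subset {S : Type*} [Semigroup S] (A : Set S) :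
    Separator A ∩ Separator (Separator A) ⊆ Separator (A ∪ Separator A) := by
  rintro x ⟨⟨hA, hAc⟩, ⟨hS, hSc⟩⟩
  constructor
  · rintro a (ha | ha)
    · exact ⟨Or.inl (hA a ha).1, Or.inl (hA a ha).2⟩
    · exact ⟨Or.inr (hS a ha).1, Or.inr (hS a ha).2⟩
  · intro b hb
    simp only [Set.mem_compl_iff, Set.mem_union, not_or] at hb ⊢
    exact ⟨⟨(hAc b hb.1).1, (hSc b hb.2).1⟩, ⟨(hAc b hb.1).2, (hSc b hb.2).2⟩⟩
end

section
/- If A is a subsemigroup of a semigroup S, then A ∪ Sep A is closed under multiplication. -/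
theorem union_sep_mul_closed {S : Type*} [Semigroup S] (A : Set S)
    (hA : ∀ x ∈ A, ∀ y ∈ A, x * y ∈ A) :
    ∀ x ∈ A ∪ Separator A, ∀ y ∈ A ∪ Separator A, x * y ∈ A ∪ Separator A := by
  rintro x (hx | ⟨hx1, hx2⟩) y (hy | ⟨hy1, hy2⟩)
  · exact Or.inl (hA x hx y hy)
  · exact Or.inl ((hy1 x hx).2)
  · exact Or.inl ((hx1 y hy).1)
  · refine Or.inr ⟨fun a ha => ?_, fun b hb => ?_⟩
    · constructor
      · rw [mul_assoc]; exact (hx1 _ (hy1 a ha).1).1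
      · rw [← mul_assoc]; exact (hy1 _ (hx1 a ha).2).2
    · constructor
      · rw [mul_assoc]; exact (hx2 _ (hy2 b hb).1).1
      · rw [← mul_assoc]; exact (hy2 _ (hx2 b hb).2).2
end

section
/- If A is a subset of a semigroup S with Sep A ≠ ∅, then either Sep A ⊆ A or Sep A ⊆ S \ A. -/
theorem sep_subset_or_subset_compl {S : Type*} [Semigroup S] (A : Set S)
    (h : (Separator A).Nonempty) : Separator A ⊆ A ∨ Separator A ⊆ Aᶜ := by
  obtain ⟨x, hx⟩ := h
  by_cases hxA : x ∈ A
  · left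
    intro y hy
    by_contra hyA
    exact (hx.2 y hyA).1 (hy.1 x hxA).2
  · right
    intro y hy hyA
    exact (hy.2 x hxA).1 (hx.1 y hyA).2
end

section
/- Let φ be a surjective semigroup homomorphism from S onto S, and let R₁, R₂ be subsets of S with φ⁻¹(R₂) = R₁. Then φ(Sep R₁) = Sep R₂. -/
theorem image_sep_eq_sep {S : Type*} [Semigroup S] (φ : S → S)
    (hmul : ∀ a b : S, φ (a * b) = φ a * φ b) (hsurj : Function.Surjective φ)
    (R₁ R₂ : Set S) (hpre : φ ⁻¹' R₂ = R₁) : φ '' Separator R₁ = Separator R₂ := by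
  have mem₁ : ∀ s : S, s ∈ R₁ ↔ φ s ∈ R₂ := by
    intro s; rw [← hpre]; rfl
  ext y
  constructor
  · rintro ⟨x, ⟨h1, h2⟩, rfl⟩
    constructor
    · intro a ha
      obtain ⟨b, rfl⟩ := hsurj a
      have hb : b ∈ R₁ := (mem₁ b).2 ha
      obtain ⟨l, r⟩ := h1 b hb
      exact ⟨by rw [← hmul]; exact (mem₁ _).1 l, by rw [← hmul]; exact (mem₁ _).1 r⟩
    · intro a ha
      obtain ⟨b, rfl⟩ := hsurj a
      have hb : b ∈ R₁ᶜ := fun h => ha ((mem₁ b).1 h)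
      obtain ⟨l, r⟩ := h2 b hb
      exact ⟨by rw [← hmul]; exact fun h => l ((mem₁ _).2 h),
             by rw [← hmul]; exact fun h => r ((mem₁ _).2 h)⟩
  · rintro ⟨h1, h2⟩
    obtain ⟨x, rfl⟩ := hsurj y
    refine ⟨x, ⟨?_, ?_⟩, rfl⟩
    · intro a ha
      obtain ⟨l, r⟩ := h1 (φ a) ((mem₁ a).1 ha)
      exact ⟨(mem₁ _).2 (by rw [hmul]; exact l), (mem₁ _).2 (by rw [hmul]; exact r)⟩
    · intro a ha
      obtain ⟨l, r⟩ := h2 (φ a) (fun h => ha ((mem₁ a).2 h))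
      exact ⟨fun h => l (by rw [← hmul]; exact (mem₁ _).1 h),
             fun h => r (by rw [← hmul]; exact (mem₁ _).1 h)⟩
end

section
/- Let A be a subset of a semigroup S with Sep A ⊆ A (A is separator including), and B any subset of S such that Sep A ∩ Sep B ≠ ∅. Then Sep (A ∪ B) ⊆ A ∪ B and Sep (A ∪ B) ≠ ∅. -/
theorem sep_union_including {S : Type*} [Semigroup S] (A B : Set S)
    (hA : Separator A ⊆ A) (h : (Separator A ∩ Separator B).Nonempty) :
    Separator (A ∪ B) ⊆ A ∪ B ∧ (Separator (A ∪ B)).Nonempty := by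
  obtain ⟨w, hwA, hwB⟩ := h
  have hwInA : w ∈ A := hA hwA
  have hwSep : w ∈ Separator (A ∪ B) := by
    constructor
    · rintro a (ha | ha)
      · exact ⟨Or.inl (hwA.1 a ha).1, Or.inl (hwA.1 a ha).2⟩
      · exact ⟨Or.inr (hwB.1 a ha).1, Or.inr (hwB.1 a ha).2⟩
    · intro b hb
      have hbA : b ∈ Aᶜ := fun hb' => hb (Or.inl hb')
      have hbB : b ∈ Bᶜ := fun hb' => hb (Or.inr hb')
      constructor
      · rintro (h1 | h1)
        · exact (hwA.2 b hbA).1 h1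
        · exact (hwB.2 b hbB).1 h1
      · rintro (h1 | h1)
        · exact (hwA.2 b hbA).2 h1
        · exact (hwB.2 b hbB).2 h1
  refine ⟨?_, ⟨w, hwSep⟩⟩
  intro y hy
  by_contra hyc
  have hyA : y ∈ Aᶜ := fun h' => hyc (Or.inl h')
  have hyB : y ∈ Bᶜ := fun h' => hyc (Or.inr h')
  have h1 : w * y ∈ A ∪ B := (hy.1 w (Or.inl hwInA)).2
  rcases h1 with h1 | h1
  · exact (hwA.2 y hyA).1 h1
  · exact (hwB.2 y hyB).1 h1
end

section
/- Let A and B be subsets of a semigroup S with Sep A ⊆ A and Sep B ⊆ B (both separator including), and suppose Sep A ∩ Sep B ≠ ∅. Then Sep (A ∩ B) ⊆ A ∩ B and Sep (A ∩ B) ≠ ∅. -/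
theorem sep_inter_including {S : Type*} [Semigroup S] (A B : Set S)
    (hA : Separator A ⊆ A) (hB : Separator B ⊆ B) (h : (Separator A ∩ Separator B).Nonempty) :
    Separator (A ∩ B) ⊆ A ∩ B ∧ (Separator (A ∩ B)).Nonempty := by
  obtain ⟨y, hyA, hyB⟩ := h
  have yA : y ∈ A := hA hyA
  have yB : y ∈ B := hB hyB
  constructor
  · intro x hx
    have hxy : x * y ∈ A ∩ B := (hx.1 y ⟨yA, yB⟩).1
    constructor
    · by_contra hxA
      exact (hyA.2 x hxA).2 hxy.1
    · by_contra hxB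
      exact (hyB.2 x hxB).2 hxy.2
  · refine ⟨y, ?_, ?_⟩
    · intro a ha
      exact ⟨⟨(hyA.1 a ha.1).1, (hyB.1 a ha.2).1⟩, ⟨(hyA.1 a ha.1).2, (hyB.1 a ha.2).2⟩⟩
    · intro b hb
      rcases not_and_or.mp hb with hb | hb
      · exact ⟨fun hc => (hyA.2 b hb).1 hc.1, fun hc => (hyA.2 b hb).2 hc.1⟩
      · exact ⟨fun hc => (hyB.2 b hb).1 hc.2, fun hc => (hyB.2 b hb).2 hc.2⟩
end

section
/- For any subset A of a semigroup S with Sep A ≠ ∅, it holds that Sep (Sep A) ⊆ Sep A. -/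
theorem sep_sep_subset_sep {S : Type*} [Semigroup S] (A : Set S)
    (h : (Separator A).Nonempty) : Separator (Separator A) ⊆ Separator A := by
  obtain ⟨s, hs⟩ := h
  intro z hz
  have hsz : s * z ∈ Separator A := (hz.1 s hs).2
  have hzs : z * s ∈ Separator A := (hz.1 s hs).1
  constructor
  · intro a ha
    constructor
    · by_contra hc
      have h1 : s * (z * a) ∈ Aᶜ := (hs.2 _ hc).1
      have h2 : (s * z) * a ∈ A := (hsz.1 a ha).1
      rw [mul_assoc] at h2
      exact h1 h2
    · by_contra hc
      have h1 : (a * z) * s ∈ Aᶜ := (hs.2 _ hc).2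
      have h2 : a * (z * s) ∈ A := (hzs.1 a ha).2
      rw [← mul_assoc] at h2
      exact h1 h2
  · intro b hb
    constructor
    · by_contra hc
      simp only [Set.notMem_compl_iff] at hc
      have h1 : s * (z * b) ∈ A := (hs.1 _ hc).1
      have h2 : (s * z) * b ∈ Aᶜ := (hsz.2 b hb).1
      rw [mul_assoc] at h2
      exact h2 h1
    · by_contra hc
      simp only [Set.notMem_compl_iff] at hc
      have h1 : (b * z) * s ∈ A := (hs.1 _ hc).2
      have h2 : b * (z * s) ∈ Aᶜ := (hzs.2 b hb).2
      rw [← mul_assoc] at h2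
      exact h2 h1
end

section
/- A subsemigroup A of a semigroup S satisfies A = Sep A if and only if A is a unitary subsemigroup of S (i.e., for all a, b ∈ S, ab ∈ A and a ∈ A imply b ∈ A, and ab ∈ A and b ∈ A imply a ∈ A). -/
theorem eq_sep_iff_unitary {S : Type*} [Semigroup S] (A : Set S)
    (hne : A.Nonempty) (hA : ∀ x ∈ A, ∀ y ∈ A, x * y ∈ A) :
    A = Separator A ↔
      (∀ a b : S, a * b ∈ A → a ∈ A → b ∈ A) ∧ (∀ a b : S, a * b ∈ A → b ∈ A → a ∈ A) := by
  constructor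
  · intro h
    constructor
    · intro a b hab ha
      by_contra hb
      have hsep : a ∈ Separator A := h ▸ ha
      exact (hsep.2 b hb).1 hab
    · intro a b hab hb
      by_contra ha
      have hsep : b ∈ Separator A := h ▸ hb
      exact (hsep.2 a ha).2 hab
  · rintro ⟨h1, h2⟩
    apply Set.eq_of_subset_of_subset
    · intro x hx
      refine ⟨fun a ha => ⟨hA x hx a ha, hA a ha x hx⟩, fun b hb => ⟨?_, ?_⟩⟩
      · intro hxb; exact hb (h1 x b hxb hx)
      · intro hbx; exact hb (h2 b x hbx hx)
    · intro x hx
      obtain ⟨a, ha⟩ := hne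
      exact h1 a x (hx.1 a ha).2 ha
end

section
/- Let I be a maximal ideal of a semigroup S which is also a maximal subsemigroup of S, and suppose Sep I ≠ ∅. Then I is a prime ideal of S. -/
/-- Iterated power in a semigroup: `sgpow a n = a^(n+1)`. -/
def sgpow {S : Type*} [Semigroup S] (a : S) : ℕ → S
  | 0 => a
  | n + 1 => sgpow a n * a

lemma sgpow_mul {S : Type*} [Semigroup S] (a : S) (m n : ℕ) :
    sgpow a m * sgpow a n = sgpow a (m + n + 1) := by
  induction n with
  | zero => rfl
  | succ n ih =>
    show sgpow a m * (sgpow a n * a) = _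
    rw [← mul_assoc, ih]
    rfl

theorem maximal_ideal_prime {S : Type*} [Semigroup S] (I : Set S)
    (hideal : ∀ s : S, ∀ x ∈ I, s * x ∈ I ∧ x * s ∈ I) (hne : I ≠ Set.univ)
    (hmaxIdeal : ∀ A : Set S, (∀ s : S, ∀ x ∈ A, s * x ∈ A ∧ x * s ∈ A) →
      I ⊆ A → A = I ∨ A = Set.univ)
    (hmaxSub : ∀ A : Set S, (∀ x ∈ A, ∀ y ∈ A, x * y ∈ A) → I ⊂ A → A = Set.univ)
    (hsep : (Separator I).Nonempty) :
    ∀ a b : S, a * b ∈ I → a ∈ I ∨ b ∈ I := by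
  intro a b hab
  by_contra h
  push_neg at h
  obtain ⟨ha, hb⟩ := h
  obtain ⟨x, hx⟩ := hsep
  -- x ∉ I
  have hc : ∃ c, c ∉ I := by
    by_contra hc; push_neg at hc
    exact hne (Set.eq_univ_of_forall hc)
  obtain ⟨c, hcI⟩ := hc
  have hxI : x ∉ I := by
    intro hxI
    exact (hx.2 c hcI).1 ((hideal c x hxI).2)
  -- For t ∉ I, the set I ∪ powers of t is all of S
  have key : ∀ t : S, t ∉ I → ∀ s : S, s ∈ I ∨ ∃ m, s = sgpow t m := by
    intro t ht s
    set A : Set S := I ∪ {u | ∃ m, u = sgpow t m} with hA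
    have hsub : ∀ u ∈ A, ∀ v ∈ A, u * v ∈ A := by
      rintro u (hu | ⟨m, rfl⟩) v (hv | ⟨n, rfl⟩)
      · exact Or.inl ((hideal u v hv).1
        )
      · exact Or.inl ((hideal (sgpow t n) u hu).2)
      · exact Or.inl ((hideal (sgpow t m) v hv).1)
      · exact Or.inr ⟨m + n + 1, sgpow_mul t m n⟩
    have hss : I ⊂ A := by
      constructor
      · exact Set.subset_union_left
      · intro hAI
        exact ht (hAI (Or.inr ⟨0, rfl⟩))
    have := hmaxSub A hsub hss
    have hs : s ∈ A := this ▸ Set.mem_univ s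
    exact hs
  obtain ⟨m, hm⟩ := (key a ha x).resolve_left hxI
  obtain ⟨n, hn⟩ := (key b hb x).resolve_left hxI
  -- a^m * b^n ∈ I since a*b ∈ I
  have hmb : ∀ m, sgpow a m * b ∈ I := by
    intro m
    induction m with
    | zero => exact hab
    | succ m ih =>
      show sgpow a m * a * b ∈ I
      rw [mul_assoc]
      exact (hideal (sgpow a m) (a * b) hab).1
  have hmn : ∀ n, sgpow a m * sgpow b n ∈ I := by
    intro n
    induction n with
    | zero => exact hmb m
    | succ n ih =>
      show sgpow a m * (sgpow b n * b) ∈ I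
      rw [← mul_assoc]
      exact (hideal b _ ih).2
  have hx2 : x * x = sgpow a m * sgpow b n := by rw [← hm, ← hn]
  have hxx : x * x ∈ I := by rw [hx2]; exact hmn n
  exact (hx.2 x hxI).1 hxx
end

section
/- If T is a free subsemigroup of a free semigroup S and Sep T ≠ ∅, then Sep T is a free subsemigroup of S. -/
def IsFreeSubsemigroup {α : Type*} (T : Set (FreeSemigroup α)) : Prop :=
  (∀ x ∈ T, ∀ y ∈ T, x * y ∈ T) ∧
    ∀ s : FreeSemigroup α,
      (∃ t ∈ T, s * t ∈ T) → (∃ t ∈ T, t * s ∈ T) → s ∈ T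
theorem sep_of_free_is_free {α : Type*} (T : Set (FreeSemigroup α))
    (hT : IsFreeSubsemigroup T) (hne : (Separator T).Nonempty) :
    IsFreeSubsemigroup (Separator T) := by
  constructor
  · rintro x ⟨hx1, hx2⟩ y ⟨hy1, hy2⟩
    refine ⟨fun a ha => ?_, fun b hb => ?_⟩
    · exact ⟨by rw [mul_assoc]; exact (hx1 _ (hy1 a ha).1).1,
        by rw [← mul_assoc]; exact (hy1 _ (hx1 a ha).2).2⟩
    · exact ⟨by rw [mul_assoc]; exact (hx2 _ (hy2 b hb).1).1,
        by rw [← mul_assoc]; exact (hy2 _ (hx2 b hb).2).2⟩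
  · rintro s ⟨t, ⟨ht1, ht2⟩, hst1, hst2⟩ ⟨t', ⟨ht'1, ht'2⟩, hts1, hts2⟩
    refine ⟨fun a ha => ⟨?_, ?_⟩, fun b hb => ⟨?_, ?_⟩⟩
    · by_contra h
      have h1 : t' * (s * a) ∈ Tᶜ := (ht'2 _ h).1
      have h2 : (t' * s) * a ∈ T := (hts1 a ha).1
      rw [mul_assoc] at h2
      exact h1 h2
    · by_contra h
      have h1 : (a * s) * t ∈ Tᶜ := (ht2 _ h).2
      have h2 : a * (s * t) ∈ T := (hst1 a ha).2
      rw [mul_assoc] at h1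
      exact h1 h2
    · intro h
      have h1 : t' * (s * b) ∈ T := (ht'1 _ h).1
      have h2 : (t' * s) * b ∈ Tᶜ := (hts2 b hb).1
      rw [mul_assoc] at h2
      exact h2 h1
    · intro h
      have h1 : (b * s) * t ∈ T := (ht1 _ h).2
      have h2 : b * (s * t) ∈ Tᶜ := (hst2 b hb).2
      rw [mul_assoc] at h1
      exact h2 h1
end

section
/- For a non-empty subset T of a free semigroup S, the following are equivalent: (i) T is a free subsemigroup such that for all t ∈ T and s ∈ S, tst ∈ T implies ts ∈ T and st ∈ T; (ii) T = Sep T. -/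
theorem free_unitary_iff_eq_sep {α : Type*} (T : Set (FreeSemigroup α))
    (hne : T.Nonempty) :
    (IsFreeSubsemigroup T ∧
        ∀ t ∈ T, ∀ s : FreeSemigroup α, t * s * t ∈ T → t * s ∈ T ∧ s * t ∈ T) ↔
      T = Separator T := by
  constructor
  · rintro ⟨⟨hclosed, hfree⟩, hunit⟩
    ext x
    constructor
    · intro hx
      refine ⟨fun a ha => ⟨hclosed x hx a ha, hclosed a ha x hx⟩, fun b hb => ⟨?_, ?_⟩⟩
      · intro hxb
        apply hb
        have h1 : x * b * x ∈ T := hclosed _ hxb _ hx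
        obtain ⟨h2, h3⟩ := hunit x hx b h1
        exact hfree b ⟨x, hx, h3⟩ ⟨x, hx, h2⟩
      · intro hbx
        apply hb
        have h1 : x * (b * x) ∈ T := hclosed _ hx _ hbx
        have h1' : x * b * x ∈ T := by rwa [mul_assoc]
        obtain ⟨h2, h3⟩ := hunit x hx b h1'
        exact hfree b ⟨x, hx, h3⟩ ⟨x, hx, h2⟩
    · intro hx
      obtain ⟨t, ht⟩ := hne
      exact hfree x ⟨t, ht, (hx.1 t ht).1⟩ ⟨t, ht, (hx.1 t ht).2⟩
  · intro hT
    have sep : ∀ x ∈ T, x ∈ Separator T := fun x hx => hT ▸ hx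
    refine ⟨⟨fun x hx y hy => ((sep y hy).1 x hx).2, ?_⟩, ?_⟩
    · rintro s ⟨t, ht, hst⟩ ⟨t', ht', hts⟩
      rw [hT]
      refine ⟨fun a ha => ⟨?_, ?_⟩, fun b hb => ⟨?_, ?_⟩⟩
      · -- s * a ∈ T
        by_contra h
        have h1 : t' * s * a ∈ T := ((sep _ hts).1 a ha).1
        rw [mul_assoc] at h1
        exact ((sep t' ht').2 _ h).1 h1
      · -- a * s ∈ T
        by_contra h
        have h1 : a * (s * t) ∈ T := ((sep _ hst).1 a ha).2
        rw [← mul_assoc] at h1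
        exact ((sep t ht).2 _ h).2 h1
      · -- s * b ∉ T
        intro h
        have h1 : t' * (s * b) ∈ T := ((sep t' ht').1 _ h).1
        rw [← mul_assoc] at h1
        exact ((sep _ hts).2 b hb).1 h1
      · -- b * s ∉ T
        intro h
        have h1 : b * s * t ∈ T := ((sep t ht).1 _ h).2
        rw [mul_assoc] at h1
        exact ((sep _ hst).2 b hb).2 h1
    · intro t ht s hmem
      constructor
      · by_contra h
        exact ((sep t ht).2 _ h).2 hmem
      · by_contra h
        have := ((sep t ht).2 _ h).1
        rw [← mul_assoc] at this
        exact this hmem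
end
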